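/- For all integers m ≥ 1 and s ≥ 0, the elements (0,m) and (2^s − 1, m) of H are conjugate in the Baumslag group G(1,2) if and only if m divides s. -/

import Mathlib

/-- The ring of dyadic rationals `ℤ[1/2]`, as a subring of `ℚ`. -/
def DyadicRat : Subring ℚ := Subring.closure {(2:ℚ)⁻¹}

lemma DyadicRat.two_mem : (2:ℚ) ∈ DyadicRat := by
  have := add_mem (Subring.one_mem DyadicRat) (Subring.one_mem DyadicRat)
  rwa [one_add_one_eq_two] at this

lemma DyadicRat.half_mem : (2:ℚ)⁻¹ ∈ DyadicRat := Subring.subset_closure rfl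

/-- `2` as a unit of `ℤ[1/2]`. -/
def DyadicRat.two : DyadicRatˣ where
  val := ⟨2, DyadicRat.two_mem⟩
  inv := ⟨(2:ℚ)⁻¹, DyadicRat.half_mem⟩
  val_inv := by ext; norm_num
  inv_val := by ext; norm_num

/-- The powers `2^m` for `m : ℤ`, as elements of `ℤ[1/2]`. -/
def pow2 (m : ℤ) : DyadicRat := ((DyadicRat.two ^ m : DyadicRatˣ) : DyadicRat)

lemma pow2_add (m q : ℤ) : pow2 (m + q) = pow2 m * pow2 q := by
  simp [pow2, zpow_add]

lemma pow2_zero : pow2 0 = 1 := by simp [pow2]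

/-- The group `H = ℤ[1/2] ⋊ ℤ`, where `ℤ` acts by powers of `2`;
multiplication is `(r,m)·(s,q) = (r + 2^m·s, m+q)`. -/
@[ext] structure Hgrp where
  r : DyadicRat
  m : ℤ

instance : Mul Hgrp := ⟨fun x y => ⟨x.r + pow2 x.m * y.r, x.m + y.m⟩⟩
instance : One Hgrp := ⟨⟨0, 0⟩⟩
instance : Inv Hgrp := ⟨fun x => ⟨-(pow2 (-x.m) * x.r), -x.m⟩⟩

lemma Hgrp.mul_def (x y : Hgrp) : x * y = ⟨x.r + pow2 x.m * y.r, x.m + y.m⟩ := rfl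
lemma Hgrp.one_def : (1 : Hgrp) = ⟨0, 0⟩ := rfl
lemma Hgrp.inv_def (x : Hgrp) : x⁻¹ = ⟨-(pow2 (-x.m) * x.r), -x.m⟩ := rfl

instance : Group Hgrp where
  mul_assoc a b c := by
    simp only [Hgrp.mul_def, Hgrp.mk.injEq, pow2_add]
    constructor <;> ring
  one_mul a := by
    obtain ⟨r, m⟩ := a
    simp only [Hgrp.one_def, Hgrp.mul_def, Hgrp.mk.injEq, pow2_zero]
    constructor <;> ring
  mul_one a := by
    obtain ⟨r, m⟩ := a
    simp only [Hgrp.one_def, Hgrp.mul_def, Hgrp.mk.injEq, pow2_zero]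
    constructor <;> ring
  inv_mul_cancel a := by
    simp only [Hgrp.inv_def, Hgrp.mul_def, Hgrp.one_def, Hgrp.mk.injEq]
    constructor <;> ring

/-- Conjugacy in `H`. -/
def conjH (x y : Hgrp) : Prop := ∃ z : Hgrp, z * x * z⁻¹ = y

/-- The element `a = (1,0)` of `H`. -/
def aH : Hgrp := ⟨1, 0⟩
/-- The element `t = (0,1)` of `H`. -/
def tH : Hgrp := ⟨0, 1⟩
lemma aH_zpow (n : ℤ) : aH ^ n = Hgrp.mk (n : DyadicRat) 0 := by
  induction n using Int.induction_on with
  | zero => simp [Hgrp.one_def]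
  | succ k ih =>
      rw [zpow_add_one, ih]
      simp only [aH, Hgrp.mul_def, Hgrp.mk.injEq, pow2_zero]
      push_cast
      constructor <;> first | ring | simp | (push_cast; ring) | (simp; ring)
  | pred k ih =>
      rw [zpow_sub_one, ih]
      simp only [aH, Hgrp.inv_def, Hgrp.mul_def, Hgrp.mk.injEq, pow2_zero, neg_zero]
      push_cast
      constructor <;> first | ring | simp | (push_cast; ring) | (simp; ring)

lemma tH_zpow (n : ℤ) : tH ^ n = Hgrp.mk 0 n := by
  induction n using Int.induction_on with
  | zero => simp [Hgrp.one_def]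
  | succ k ih =>
      rw [zpow_add_one, ih]
      simp [tH, Hgrp.mul_def]
  | pred k ih =>
      rw [zpow_sub_one, ih]
      simp only [tH, Hgrp.inv_def, Hgrp.mul_def, Hgrp.mk.injEq]
      constructor <;> ring

lemma aH_zpow_injective : Function.Injective fun n : ℤ => aH ^ n := by
  intro x y h
  simp only [aH_zpow, Hgrp.mk.injEq] at h
  have : ((x : DyadicRat) : ℚ) = ((y : DyadicRat) : ℚ) := by rw [h.1]
  simpa using this

lemma tH_zpow_injective : Function.Injective fun n : ℤ => tH ^ n := by
  intro x y h
  simp only [tH_zpow, Hgrp.mk.injEq] at h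
  exact h.2

/-- The homomorphism `ℤ →* G` given by powers of `g`. -/
def zintHom {G : Type*} [Group G] (g : G) : Multiplicative ℤ →* G where
  toFun n := g ^ (Multiplicative.toAdd n)
  map_one' := by simp
  map_mul' x y := by simp [zpow_add]

/-- For `g` with `n ↦ g ^ n` injective, `⟨g⟩ ≅ ℤ`. -/
noncomputable def zpowMulEquiv {G : Type*} [Group G] (g : G)
    (hg : Function.Injective fun n : ℤ => g ^ n) :
    Multiplicative ℤ ≃* Subgroup.zpowers g := by
  refine MulEquiv.ofBijective
    ((zintHom g).codRestrict (Subgroup.zpowers g).toSubmonoid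
      (fun n => Subgroup.mem_zpowers_iff.mpr ⟨Multiplicative.toAdd n, rfl⟩)) ⟨?_, ?_⟩
  · intro x y h
    have : g ^ (Multiplicative.toAdd x) = g ^ (Multiplicative.toAdd y) :=
      congrArg Subtype.val h
    exact hg this
  · rintro ⟨x, hx⟩
    obtain ⟨n, hn⟩ := Subgroup.mem_zpowers_iff.mp hx
    exact ⟨Multiplicative.ofAdd n, Subtype.ext hn⟩

/-- The associated isomorphism `⟨a⟩ ≅ ⟨t⟩`, `a ↦ t`, of the HNN extension defining
the Baumslag group. -/
noncomputable def φBS : Subgroup.zpowers aH ≃* Subgroup.zpowers tH :=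
  (zpowMulEquiv aH aH_zpow_injective).symm.trans (zpowMulEquiv tH tH_zpow_injective)

/-- The Baumslag group `G(1,2)`, as HNN extension of `H = BS(1,2)` with stable letter `b`,
associated subgroups `⟨a⟩` and `⟨t⟩`, and associated isomorphism `a ↦ t`. -/
noncomputable abbrev BG := HNNExtension Hgrp (Subgroup.zpowers aH) (Subgroup.zpowers tH) φBS

/-- The embedding of `H` into the Baumslag group. -/
noncomputable def ι : Hgrp →* BG := HNNExtension.of

/-- The stable letter `b` of the Baumslag group. -/
noncomputable def bBG : BG := HNNExtension.t

/-- Conjugacy in the Baumslag group `G(1,2)`. -/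
def conjBG (x y : BG) : Prop := ∃ z : BG, z * x * z⁻¹ = y

/-!
Conjugating `(r, n)` by `(c, q)` in `H` gives `((1 - 2^n) c + 2^q r, n)`, so for `n ≠ 0` the
element `(r, n)` is `H`-conjugate to `t^n = (0, n)` exactly when `1 - 2^n` divides `r` in `ℤ[1/2]`.

In an HNN extension, Britton's lemma shows that conjugation cannot leave the set of elements of
the base group that are conjugate in it into `A ∪ B`: peeling the first letter `t^{±1}` off a
reduced conjugator forces the conjugated element into an associated subgroup, on which that letter
acts as `φ^{±1}`. Conjugates of `⟨a⟩` lie in `ℤ[1/2] × {0}`, so an element `(r, m)` of `H` that is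
conjugate to `t^m` in `G(1,2)` is `H`-conjugate to `t^m` already. Finally `2^m - 1` is odd, so it
divides `2^s - 1` in `ℤ[1/2]` iff it does in `ℤ`, iff `m ∣ s`.
-/

namespace HNNExtension
open NormalWord

variable {G : Type*} [Group G] {A B : Subgroup G} {φ : A ≃* B}

theorem of_toSubgroupEquiv (u : ℤˣ) (a : toSubgroup A B u) :
    (of (toSubgroupEquiv φ u a : G) : HNNExtension G A B φ) =
      t ^ (u : ℤ) * of (a : G) * (t ^ (u : ℤ))⁻¹ := by
  rcases Int.units_eq_one_or u with rfl | rfl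
  · rw [Units.val_one, zpow_one]
    exact equiv_eq_conj a
  · rw [Units.val_neg, Units.val_one, zpow_neg_one, inv_inv]
    exact equiv_symm_eq_conj a

namespace NormalWord.ReducedWord

theorem exists_prod_eq (z : HNNExtension G A B φ) : ∃ w : ReducedWord G A B, w.prod φ = z := by
  obtain ⟨d⟩ := TransversalPair.nonempty G A B
  exact ⟨(z • NormalWord.empty (d := d)).toReducedWord, by simp⟩

theorem exists_prod_eq_prod_mul_of (w : ReducedWord G A B) (hw : w.toList ≠ []) (x : G) :
    ∃ w' : ReducedWord G A B, w'.head = w.head ∧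
      w'.toList.map Prod.fst = w.toList.map Prod.fst ∧ w'.prod φ = w.prod φ * of x := by
  obtain ⟨h, L, hL⟩ := w
  obtain ⟨l, ⟨u, g⟩, rfl⟩ := (L.eq_nil_or_concat').resolve_left hw
  refine ⟨⟨h, l ++ [(u, g * x)], ?_⟩, rfl, by simp, by simp [ReducedWord.prod, mul_assoc]⟩
  rw [List.isChain_append] at hL ⊢
  exact ⟨hL.1, List.isChain_singleton _, by simpa using hL.2.2⟩

end NormalWord.ReducedWord

theorem mem_of_conj_of_mem (S : Set G) (hS : ∀ g x, x ∈ S → g * x * g⁻¹ ∈ S)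
    (hφ : ∀ u (a : toSubgroup A B u), (a : G) ∈ S → (toSubgroupEquiv φ u a : G) ∈ S)
    {x y : G} (hx : x ∈ S) (z : HNNExtension G A B φ) (hz : z * of x * z⁻¹ = of y) : y ∈ S := by
  obtain ⟨⟨h, L, hL⟩, rfl⟩ := ReducedWord.exists_prod_eq z
  induction L generalizing h y with
  | nil =>
    have hxy : of (h * x * h⁻¹) = (of y : HNNExtension G A B φ) := by
      simpa [ReducedWord.prod] using hz
    exact of_injective (φ := φ) hxy ▸ hS h x hx
  | cons a L ih =>
    obtain ⟨u, g⟩ := a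
    set w : ReducedWord G A B := ⟨h, (u, g) :: L, hL⟩
    let w' : ReducedWord G A B := ⟨g, L, hL.tail⟩
    have hw : w.prod φ = of h * t ^ (u : ℤ) * w'.prod φ := by
      simp [w, w', ReducedWord.prod, mul_assoc]
    -- Britton: `w * of x` and `of y * w` have reduced forms with the same letters
    have hb : h⁻¹ * y * h ∈ toSubgroup A B (-u) := by
      obtain ⟨w₁, hhead, hfst, hprod⟩ := w.exists_prod_eq_prod_mul_of (by simp [w]) x
      have hprod' : w₁.prod φ = (⟨y * h, (u, g) :: L, hL⟩ : ReducedWord G A B).prod φ := by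
        rw [hprod, mul_inv_eq_iff_eq_mul.mp hz]
        simp [w, ReducedWord.prod, mul_assoc]
      have hu : u ∈ w₁.toList.head?.map Prod.fst := by rw [← List.head?_map, hfst]; simp [w]
      simpa [hhead, w, mul_assoc] using (ReducedWord.map_fst_eq_and_of_prod_eq φ hprod').2 u hu
    have hz' : w'.prod φ * of x * (w'.prod φ)⁻¹ =
        of (toSubgroupEquiv φ (-u) ⟨_, hb⟩ : G) := by
      rw [of_toSubgroupEquiv]
      simp only [Units.val_neg, zpow_neg, inv_inv, map_mul, map_inv, ← hz, hw]
      group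
    have hb' := hφ _ _ (ih g hL.tail hz')
    rw [toSubgroupEquiv_neg_apply] at hb'
    simpa [mul_assoc] using hS h _ hb'

theorem exists_conj_mem_toSubgroup_of_conj_of {u : ℤˣ} {x y : G} (hx : x ∈ toSubgroup A B u)
    (z : HNNExtension G A B φ) (hz : z * of x * z⁻¹ = of y) :
    ∃ g v, g * y * g⁻¹ ∈ toSubgroup A B v := by
  refine mem_of_conj_of_mem {y | ∃ g v, g * y * g⁻¹ ∈ toSubgroup A B v} ?_ ?_
    ⟨1, u, by simpa using hx⟩ z hz
  · rintro g x ⟨g', v, hg'⟩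
    exact ⟨g' * g⁻¹, v, by simpa [mul_assoc] using hg'⟩
  · intro u a _
    exact ⟨1, -u, by simp⟩

end HNNExtension

theorem Nat.pow_sub_one_dvd_pow_sub_one_iff {a : ℕ} (ha : 1 < a) {m n : ℕ} :
    a ^ m - 1 ∣ a ^ n - 1 ↔ m ∣ n := by
  rw [← Nat.gcd_eq_left_iff_dvd, Nat.pow_sub_one_gcd_pow_sub_one, ← Nat.gcd_eq_left_iff_dvd,
    tsub_left_inj (Nat.one_le_pow _ _ (by omega)) (Nat.one_le_pow _ _ (by omega)),
    Nat.pow_right_inj ha]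

theorem DyadicRat.exists_two_pow_mul_eq_intCast {x : ℚ} (hx : x ∈ DyadicRat) :
    ∃ (e : ℕ) (a : ℤ), 2 ^ e * x = a := by
  induction hx using Subring.closure_induction with
  | mem y hy =>
    rw [Set.mem_singleton_iff.mp hy]
    exact ⟨1, 1, by norm_num⟩
  | zero => exact ⟨0, 0, by simp⟩
  | one => exact ⟨0, 1, by simp⟩
  | add y z _ _ hy hz =>
    obtain ⟨e, a, hy⟩ := hy
    obtain ⟨f, b, hz⟩ := hz
    exact ⟨e + f, 2 ^ f * a + 2 ^ e * b, by push_cast; rw [← hy, ← hz]; ring⟩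
  | neg y _ hy =>
    obtain ⟨e, a, hy⟩ := hy
    exact ⟨e, -a, by push_cast; rw [← hy]; ring⟩
  | mul y z _ _ hy hz =>
    obtain ⟨e, a, hy⟩ := hy
    obtain ⟨f, b, hz⟩ := hz
    exact ⟨e + f, a * b, by push_cast; rw [← hy, ← hz]; ring⟩

theorem DyadicRat.intCast_dvd_intCast {d N : ℤ} (hd : Odd d) :
    (d : DyadicRat) ∣ (N : DyadicRat) ↔ d ∣ N := by
  refine ⟨fun ⟨x, hx⟩ => ?_, Int.cast_dvd_cast _ _⟩
  obtain ⟨e, a, ha⟩ := DyadicRat.exists_two_pow_mul_eq_intCast x.2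
  have hxQ : (N : ℚ) = d * x := by exact_mod_cast congrArg Subtype.val hx
  have h2N : ((2 ^ e * N : ℤ) : ℚ) = (d * a : ℤ) := by
    push_cast
    rw [← ha, hxQ]
    ring
  exact (Int.isCoprime_two_right.mpr hd).pow_right.dvd_of_dvd_mul_left ⟨a, by exact_mod_cast h2N⟩

theorem DyadicRat.two_pow_sub_one_dvd_iff {m s : ℕ} (hm : 0 < m) :
    (2 ^ m - 1 : DyadicRat) ∣ 2 ^ s - 1 ↔ m ∣ s := by
  have h := DyadicRat.intCast_dvd_intCast (d := 2 ^ m - 1) (N := 2 ^ s - 1)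
    (by simp [Int.even_pow, hm.ne'])
  push_cast at h
  rw [h, ← Nat.pow_sub_one_dvd_pow_sub_one_iff one_lt_two]
  zify [Nat.one_le_two_pow]

theorem pow2_natCast (n : ℕ) : pow2 n = 2 ^ n := by
  simp only [pow2, zpow_natCast, Units.val_pow_eq_pow_val]
  rfl

namespace Hgrp

theorem conj_mk (c r : DyadicRat) (q n : ℤ) :
    (⟨c, q⟩ * ⟨r, n⟩ * (⟨c, q⟩ : Hgrp)⁻¹ : Hgrp) = ⟨(1 - pow2 n) * c + pow2 q * r, n⟩ := by
  have h : pow2 (q + n) * pow2 (-q) = pow2 n := by rw [← pow2_add]; congr 1; ring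
  simp only [Hgrp.mul_def, Hgrp.inv_def, Hgrp.mk.injEq]
  constructor
  · linear_combination (-c) * h
  · ring

theorem m_conj (g y : Hgrp) : (g * y * g⁻¹).m = y.m := by
  rw [conj_mk g.r y.r g.m y.m]

end Hgrp

theorem conjH_mk_zero_iff (n : ℤ) (r : DyadicRat) : conjH ⟨0, n⟩ ⟨r, n⟩ ↔ (1 - pow2 n) ∣ r := by
  constructor
  · rintro ⟨⟨c, q⟩, hz⟩
    rw [Hgrp.conj_mk, Hgrp.mk.injEq, mul_zero, add_zero] at hz
    exact ⟨c, hz.1.symm⟩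
  · rintro ⟨c, rfl⟩
    exact ⟨⟨c, 0⟩, by rw [Hgrp.conj_mk, mul_zero, add_zero]⟩

theorem conjBG_ι_iff_conjH {n : ℤ} (hn : n ≠ 0) (r : DyadicRat) :
    conjBG (ι ⟨0, n⟩) (ι ⟨r, n⟩) ↔ conjH ⟨0, n⟩ ⟨r, n⟩ := by
  constructor
  · rintro ⟨z, hz⟩
    have ht : (⟨0, n⟩ : Hgrp) ∈
        HNNExtension.toSubgroup (Subgroup.zpowers aH) (Subgroup.zpowers tH) (-1) :=
      ⟨n, tH_zpow n⟩
    obtain ⟨g, v, hg⟩ := HNNExtension.exists_conj_mem_toSubgroup_of_conj_of ht z hz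
    rcases Int.units_eq_one_or v with rfl | rfl
    · obtain ⟨k, hk⟩ := Subgroup.mem_zpowers_iff.mp hg
      rw [aH_zpow] at hk
      exact absurd ((congrArg Hgrp.m hk).trans (Hgrp.m_conj g _)).symm hn
    · obtain ⟨k, hk⟩ := Subgroup.mem_zpowers_iff.mp hg
      rw [tH_zpow] at hk
      obtain rfl : k = n := (congrArg Hgrp.m hk).trans (Hgrp.m_conj g _)
      exact ⟨g⁻¹, by rw [hk]; group⟩
  · rintro ⟨g, hg⟩
    exact ⟨ι g, by rw [← hg, map_mul, map_mul, map_inv]⟩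

theorem stmt8 (m s : ℤ) (hm : 1 ≤ m) (hs : 0 ≤ s) :
    conjBG (ι ⟨0, m⟩) (ι ⟨((2 ^ s.toNat - 1 : ℤ) : DyadicRat), m⟩) ↔ m ∣ s := by
  lift m to ℕ using (by omega)
  lift s to ℕ using hs
  rw [conjBG_ι_iff_conjH (by omega), conjH_mk_zero_iff, pow2_natCast, Int.toNat_natCast,
    ← neg_sub, neg_dvd, Int.natCast_dvd_natCast]
  push_cast
  exact DyadicRat.two_pow_sub_one_dvd_iff (by omega)
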